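/- arXiv:1112.1455 — 4 statements merged into one kernel-verified Lean document; each statement's English description precedes it below -/
import Mathlib

section
/- There is no order isomorphism between the complete lattice of open subsets of ℕ (with the discrete topology) and the complete lattice of open subsets of the one-point compactification ℕ ∪ {∞} of ℕ. (This is how the paper distinguishes the C*-algebras c₀ and c by the order structure of their open projections, even though they have isomorphic biduals.) -/
/-!
In `Opens X` the lattice operations are union and intersection, so an open set has a complement
in the lattice exactly when it is clopen. For discrete `ℕ` every open set is clopen, whereas in
`OnePoint ℕ` the open set `ℕ` is dense and proper, hence not closed. Being a complemented lattice
is invariant under order isomorphisms.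
-/

open Set TopologicalSpace

namespace TopologicalSpace.Opens

variable {X : Type*} [TopologicalSpace X]

theorem isCompl_iff {U V : Opens X} : IsCompl U V ↔ IsCompl (U : Set X) V := by
  simp only [_root_.isCompl_iff, disjoint_iff, codisjoint_iff, ← SetLike.coe_set_eq, coe_inf,
    coe_sup, coe_bot, coe_top, bot_eq_empty, top_eq_univ, inf_eq_inter, sup_eq_union]

theorem isComplemented_iff_isClosed {U : Opens X} : IsComplemented U ↔ IsClosed (U : Set X) := by
  constructor
  · rintro ⟨V, hUV⟩
    exact (isCompl_iff.mp hUV).symm.compl_eq ▸ V.isOpen.isClosed_compl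
  · intro hU
    exact ⟨⟨(U : Set X)ᶜ, hU.isOpen_compl⟩, isCompl_iff.mpr isCompl_compl⟩

instance complementedLattice_of_discreteTopology [DiscreteTopology X] :
    ComplementedLattice (Opens X) :=
  ⟨fun _ ↦ isComplemented_iff_isClosed.mpr (isClosed_discrete _)⟩

end TopologicalSpace.Opens

namespace OnePoint

variable {X : Type*} [TopologicalSpace X]

theorem not_isClosed_range_coe [NoncompactSpace X] : ¬IsClosed (range ((↑) : X → OnePoint X)) :=
  fun h ↦ infty_notMem_range_coe <| by
    rw [← h.closure_eq, denseRange_coe.closure_range]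
    exact mem_univ _

theorem not_complementedLattice_opens [NoncompactSpace X] :
    ¬ComplementedLattice (Opens (OnePoint X)) := fun _ ↦
  not_isClosed_range_coe <| Opens.isComplemented_iff_isClosed.mp <|
    exists_isCompl (⟨_, isOpen_range_coe⟩ : Opens (OnePoint X))

end OnePoint

/-- There is no order isomorphism between the complete lattice of open subsets of `ℕ`
(with the discrete topology) and the complete lattice of open subsets of the one-point
compactification `OnePoint ℕ` of `ℕ`. -/
theorem no_orderIso_opens_nat_onePoint :
    IsEmpty (TopologicalSpace.Opens ℕ ≃o TopologicalSpace.Opens (OnePoint ℕ)) :=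
  ⟨fun e ↦ OnePoint.not_complementedLattice_opens (e.complementedLattice_iff.mp inferInstance)⟩
end

section
/- Let D be a C*-algebra, C a commutative hereditary C*-subalgebra of D, and m an element of the multiplier algebra M(D) of D. Then for all x, y ∈ C one has ι(x)·m·ι(y) = ι(y)·m·ι(x) in M(D), where ι : D → M(D) is the canonical embedding. -/
/-!
Take an approximate unit `(e)` of `C` whose members have the form `star s * s` with `s ∈ C`.
Then `x * m * y = lim x e * m * e y`, and `e * m * e = star s * (s * m * star s) * s` lies in `C`,
because a hereditary subalgebra is closed under conjugation by its own elements. Since `C` is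
commutative, `x * (e m e) * y = y * (e m e) * x`, and passing to the limit gives the claim.
-/

open scoped MultiplierAlgebra
open Filter Topology

/-- A *hereditary C*-subalgebra* of a C*-algebra `D`: a norm-closed star-subalgebra `C ⊆ D`
such that whenever `a ∈ D` and `b ∈ C` satisfy `0 ≤ a ≤ b`, then `a ∈ C`. -/
def IsHereditarySubalgebra {D : Type*} [NonUnitalCStarAlgebra D] [PartialOrder D]
    [StarOrderedRing D] (C : NonUnitalStarSubalgebra ℂ D) : Prop :=
  IsClosed (C : Set D) ∧ ∀ ⦃a b : D⦄, b ∈ C → 0 ≤ a → a ≤ b → a ∈ C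

namespace DoubleCentralizer

variable {A : Type*} [NonUnitalCStarAlgebra A]

lemma fst_apply_mul (m : 𝓜(ℂ, A)) (b c : A) : m.fst (b * c) = m.fst b * c := by
  have h : ∀ x : A, x * m.fst (b * c) = x * (m.fst b * c) := fun x => by
    rw [← m.central x (b * c), ← mul_assoc, m.central x b, mul_assoc]
  have hz : star (m.fst (b * c) - m.fst b * c) * (m.fst (b * c) - m.fst b * c) = 0 := by
    rw [mul_sub, h, sub_self]
  exact sub_eq_zero.mp <| (CStarRing.star_mul_self_eq_zero_iff _).mp hz

lemma mul_coe (m : 𝓜(ℂ, A)) (b : A) : m * (b : 𝓜(ℂ, A)) = (m.fst b : 𝓜(ℂ, A)) := by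
  refine DoubleCentralizer.ext ℂ A _ _ (Prod.ext ?_ ?_)
  · ext c
    exact fst_apply_mul m b c
  · ext c
    exact m.central c b

lemma coe_mul (a b : A) : ((a * b : A) : 𝓜(ℂ, A)) = (a : 𝓜(ℂ, A)) * (b : 𝓜(ℂ, A)) :=
  map_mul (coeHom (𝕜 := ℂ) (A := A)) a b

end DoubleCentralizer

lemma CStarAlgebra.exists_isApproximateUnit_star_mul_self (A : Type*) [NonUnitalCStarAlgebra A] :
    ∃ l : Filter A, l.IsApproximateUnit ∧ ∀ᶠ e in l, ∃ s, e = star s * s := by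
  let _ := CStarAlgebra.spectralOrder A
  have := CStarAlgebra.spectralOrderedRing A
  exact ⟨approximateUnit A, (increasingApproximateUnit A).toIsApproximateUnit,
    (increasingApproximateUnit A).eventually_nonneg.mono
      fun _ => CStarAlgebra.nonneg_iff_eq_star_mul_self.mp⟩

lemma mul_mul_eq_mul_mul_of_comm {R : Type*} [Semigroup R] {x u y : R} (hxu : x * u = u * x)
    (hxy : x * y = y * x) (huy : u * y = y * u) : x * u * y = y * u * x := by
  rw [hxu, mul_assoc, hxy, ← mul_assoc, huy, mul_assoc]

namespace IsHereditarySubalgebra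

variable {D : Type*} [NonUnitalCStarAlgebra D] [PartialOrder D] [StarOrderedRing D]
  {C : NonUnitalStarSubalgebra ℂ D}

lemma star_mul_mul_mem_of_nonneg (hC : IsHereditarySubalgebra C) {c d : D} (hc : c ∈ C)
    (hd : 0 ≤ d) : star c * d * c ∈ C := by
  refine hC.2 ?_ (star_left_conjugate_nonneg hd c)
    (CStarAlgebra.star_left_conjugate_le_norm_smul hd.isSelfAdjoint)
  rw [← Complex.coe_smul]
  exact SMulMemClass.smul_mem _ (mul_mem (star_mem hc) hc)

lemma star_mul_mul_mem (hC : IsHereditarySubalgebra C) {c : D} (hc : c ∈ C) (d : D) :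
    star c * d * c ∈ C := by
  have hspan : Submodule.span ℂ {a : D | 0 ≤ a} ≤
      C.toNonUnitalSubalgebra.toSubmodule.comap (LinearMap.mulLeftRight ℂ (star c, c)) :=
    Submodule.span_le.mpr fun _ ha => hC.star_mul_mul_mem_of_nonneg hc ha
  rw [CStarAlgebra.span_nonneg] at hspan
  exact hspan Submodule.mem_top

lemma star_mul_self_mul_fst_mem (hC : IsHereditarySubalgebra C) (m : 𝓜(ℂ, D)) {s : D}
    (hs : s ∈ C) : star s * s * m.fst (star s * s) ∈ C := by
  have : star s * s * m.fst (star s * s) = star s * (s * m.fst (star s)) * s := by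
    rw [DoubleCentralizer.fst_apply_mul, mul_assoc, mul_assoc, mul_assoc]
  rw [this]
  exact hC.star_mul_mul_mem hs _

lemma mul_fst_comm (hC : IsHereditarySubalgebra C) (hcomm : ∀ x ∈ C, ∀ y ∈ C, x * y = y * x)
    (m : 𝓜(ℂ, D)) {x y : D} (hx : x ∈ C) (hy : y ∈ C) : x * m.fst y = y * m.fst x := by
  have : IsClosed (C : Set D) := hC.1
  obtain ⟨l, hl, hl_star_mul_self⟩ := CStarAlgebra.exists_isApproximateUnit_star_mul_self C
  have := hl.neBot
  have approx : ∀ {x y : D}, x ∈ C → y ∈ C →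
      Tendsto (fun e : C => x * e * m.fst (e * y)) l (𝓝 (x * m.fst y)) := fun hx hy =>
    (continuous_subtype_val.tendsto _ |>.comp (hl.tendsto_mul_left ⟨_, hx⟩)).mul <|
      m.fst.continuous.tendsto _ |>.comp <|
        continuous_subtype_val.tendsto _ |>.comp (hl.tendsto_mul_right ⟨_, hy⟩)
  refine tendsto_nhds_unique ((approx hx hy).congr' ?_) (approx hy hx)
  filter_upwards [hl_star_mul_self]
  rintro _ ⟨s, rfl⟩
  have hu : ((star s * s : C) : D) * m.fst (star s * s : C) ∈ C := by
    simpa using hC.star_mul_self_mul_fst_mem m s.2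
  simp only [DoubleCentralizer.fst_apply_mul, ← mul_assoc]
  rw [mul_assoc x, mul_assoc y]
  exact mul_mul_eq_mul_mul_of_comm (hcomm _ hx _ hu) (hcomm _ hx _ hy) (hcomm _ hu _ hy)

end IsHereditarySubalgebra

/-- If `C` is a commutative hereditary C*-subalgebra of a C*-algebra `D` and `m` is an element
of the multiplier algebra `M(D) = 𝓜(ℂ, D)`, then `x m y = y m x` in `M(D)` for all
`x, y ∈ C`, where elements of `D` are viewed in `M(D)` via the canonical embedding. -/
theorem comm_hereditary_multiplier_comm
    {D : Type*} [NonUnitalCStarAlgebra D] [PartialOrder D] [StarOrderedRing D]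
    (C : NonUnitalStarSubalgebra ℂ D) (hC : IsHereditarySubalgebra C)
    (hcomm : ∀ x ∈ C, ∀ y ∈ C, x * y = y * x) (m : 𝓜(ℂ, D)) :
    ∀ x ∈ C, ∀ y ∈ C,
      (x : 𝓜(ℂ, D)) * m * (y : 𝓜(ℂ, D)) = (y : 𝓜(ℂ, D)) * m * (x : 𝓜(ℂ, D)) := by
  intro x hx y hy
  rw [mul_assoc, DoubleCentralizer.mul_coe, ← DoubleCentralizer.coe_mul,
    hC.mul_fst_comm hcomm m hx hy, DoubleCentralizer.coe_mul, ← DoubleCentralizer.mul_coe,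
    mul_assoc]
end

section
/- Let B be a C*-algebra, z a positive element of B, and τ : B → ℂ a continuous linear functional which is positive (τ maps positive elements to nonnegative reals) and tracial (τ(ab) = τ(ba) for all a, b ∈ B). Suppose there is a sequence (x_k) in the C*-algebra M₂(B) of 2×2 matrices over B such that ‖x_k* · diag(z, 0) · x_k − diag(z, z)‖ → 0 as k → ∞ (i.e. diag(z,z) is Cuntz subequivalent to diag(z,0) in M₂(B)). Then τ(z) = 0. -/
/-!
The first row `(a, b)` of `x k` satisfies `a* z a ≈ z`, `b* z b ≈ z`, `a* z b ≈ 0 ≈ b* z a`: it is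
an approximate pair of Cuntz isometries relative to `z`. Products `c_k y_i` of two such families
form another one, so there are approximate families `y_1, …, y_N` for `N = 2 ^ n`. Put
`u_i = z^{1/2} y_i`. By the trace property `τ (∑ u_i u_i*) = ∑ τ (y_i* z y_i) ≈ N τ z`, while the
`u_i* u_j ≈ δ_ij z` are nearly orthogonal, which keeps `‖∑ u_i u_i*‖` close to `‖z‖`. Hence
`N (τ z).re ≤ ‖τ‖ ‖z‖` for every `N = 2 ^ n`, and positivity of `τ` does the rest.
-/

open Filter Topology
open scoped ComplexOrder

attribute [local instance] Matrix.normedAddCommGroup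

section CuntzFamily

variable {B : Type*} [NonUnitalCStarAlgebra B]

structure IsApproxCuntzFamily {ι : Type*} (z : B) (ε : ℝ) (y : ι → B) : Prop where
  diag : ∀ i, ‖star (y i) * z * y i - z‖ ≤ ε
  offDiag : ∀ ⦃i j⦄, i ≠ j → ‖star (y i) * z * y j‖ ≤ ε

def HasApproxCuntzFamilies (z : B) (ι : Type*) : Prop :=
  ∀ ε > 0, ∃ y : ι → B, IsApproxCuntzFamily z ε y

variable {ι κ : Type*} {z : B}

namespace IsApproxCuntzFamily

theorem mono {ε ε' : ℝ} {y : ι → B} (hy : IsApproxCuntzFamily z ε y) (hε : ε ≤ ε') :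
    IsApproxCuntzFamily z ε' y :=
  ⟨fun i => (hy.diag i).trans hε, fun _ _ hij => (hy.offDiag hij).trans hε⟩

theorem comp_injective {ε : ℝ} {y : ι → B} (hy : IsApproxCuntzFamily z ε y) {f : κ → ι}
    (hf : f.Injective) : IsApproxCuntzFamily z ε (y ∘ f) :=
  ⟨fun i => hy.diag (f i), fun _ _ hij => hy.offDiag (hf.ne hij)⟩

theorem prod {δ ε M : ℝ} {c : κ → B} {y : ι → B} (hc : IsApproxCuntzFamily z δ c)
    (hy : IsApproxCuntzFamily z ε y) (hM : ∀ i, ‖y i‖ ≤ M) :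
    IsApproxCuntzFamily z (M ^ 2 * δ + ε) (fun p : κ × ι => c p.1 * y p.2) := by
  have hconj (i j : ι) (w : B) : ‖star (y i) * w * y j‖ ≤ M ^ 2 * ‖w‖ := by
    have hM0 : 0 ≤ M := (norm_nonneg _).trans (hM i)
    calc ‖star (y i) * w * y j‖ ≤ ‖y i‖ * ‖w‖ * ‖y j‖ := by
          simpa only [norm_star] using norm_mul₃_le (a := star (y i)) (b := w) (c := y j)
      _ ≤ M * ‖w‖ * M := by gcongr <;> exact hM _
      _ = M ^ 2 * ‖w‖ := by ring
  have hexpand (k l : κ) (i j : ι) : star (c k * y i) * z * (c l * y j)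
      = star (y i) * (star (c k) * z * c l) * y j := by
    simp only [star_mul, mul_assoc]
  have hblock (k : κ) (i j : ι) : star (c k * y i) * z * (c k * y j)
      = star (y i) * (star (c k) * z * c k - z) * y j + star (y i) * z * y j := by
    rw [hexpand, mul_sub, sub_mul, sub_add_cancel]
  constructor
  · rintro ⟨k, i⟩
    rw [hblock, add_sub_assoc]
    exact norm_add_le_of_le ((hconj i i _).trans (by gcongr; exact hc.diag k)) (hy.diag i)
  · rintro ⟨k, i⟩ ⟨l, j⟩ hne
    by_cases hkl : k = l
    · subst hkl
      have hij : i ≠ j := fun h => hne (h ▸ rfl)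
      rw [hblock]
      exact norm_add_le_of_le ((hconj i j _).trans (by gcongr; exact hc.diag k)) (hy.offDiag hij)
    · have hε : 0 ≤ ε := (norm_nonneg _).trans (hy.diag i)
      calc _ = ‖star (y i) * (star (c k) * z * c l) * y j‖ := congrArg norm (hexpand k l i j)
        _ ≤ M ^ 2 * δ := (hconj i j _).trans (by gcongr; exact hc.offDiag hkl)
        _ ≤ M ^ 2 * δ + ε := le_add_of_nonneg_right hε

end IsApproxCuntzFamily

namespace HasApproxCuntzFamilies

theorem of_embedding (h : HasApproxCuntzFamilies z ι) (f : κ ↪ ι) :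
    HasApproxCuntzFamilies z κ := fun ε hε =>
  let ⟨y, hy⟩ := h ε hε
  ⟨y ∘ f, hy.comp_injective f.injective⟩

theorem prod [Finite ι] (hc : HasApproxCuntzFamilies z κ) (hy : HasApproxCuntzFamilies z ι) :
    HasApproxCuntzFamilies z (κ × ι) := by
  intro ε hε
  obtain ⟨y, hy⟩ := hy (ε / 2) (half_pos hε)
  obtain ⟨M, hM⟩ := Finite.exists_le fun i => ‖y i‖
  obtain ⟨c, hc⟩ := hc (ε / (2 * (M ^ 2 + 1))) (by positivity)
  refine ⟨_, (hc.prod hy hM).mono ?_⟩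
  have : M ^ 2 * (ε / (2 * (M ^ 2 + 1))) ≤ ε / 2 := by
    rw [mul_div_assoc', div_le_div_iff₀ (by positivity) two_pos]
    nlinarith
  linarith

theorem pi [Finite κ] [Nonempty κ] (h : HasApproxCuntzFamilies z κ) :
    ∀ n, HasApproxCuntzFamilies z (Fin n → κ)
  | 0 => h.of_embedding ⟨fun _ => Classical.arbitrary κ, Function.injective_of_subsingleton _⟩
  | n + 1 => (h.prod (h.pi n)).of_embedding (Fin.consEquiv fun _ => κ).symm.toEmbedding

end HasApproxCuntzFamilies

end CuntzFamily

section NormSum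

variable {A : Type*} [NonUnitalCStarAlgebra A] [PartialOrder A] [StarOrderedRing A]
  {ι : Type*} [Fintype ι]

theorem norm_sum_conj_star_mul_self_le (u : ι → A) {c : ℝ} (hc0 : 0 ≤ c)
    (hc : ∀ i, ‖star (u i) * u i‖ ≤ c) :
    ‖∑ i, u i * (star (u i) * u i) * star (u i)‖ ≤ c * ‖∑ i, u i * star (u i)‖ := by
  calc _ ≤ ‖c • ∑ i, u i * star (u i)‖ := by
        refine CStarAlgebra.norm_le_norm_of_nonneg_of_le
          (Finset.sum_nonneg fun i _ => star_right_conjugate_nonneg (star_mul_self_nonneg _) _) ?_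
        rw [Finset.smul_sum]
        gcongr with i
        exact (CStarAlgebra.star_right_conjugate_le_norm_smul).trans
          (smul_le_smul_of_nonneg_right (hc i) (mul_star_self_nonneg _))
    _ = c * ‖∑ i, u i * star (u i)‖ := by rw [norm_smul, Real.norm_of_nonneg hc0]

theorem norm_sum_mul_star_le (u : ι → A) {c ε : ℝ} (hc0 : 0 ≤ c) (hε0 : 0 ≤ ε)
    (hc : ∀ i, ‖star (u i) * u i‖ ≤ c) (hε : ∀ ⦃i j⦄, i ≠ j → ‖star (u i) * u j‖ ≤ ε) :
    ‖∑ i, u i * star (u i)‖ ≤ c + Fintype.card ι ^ 2 * ε := by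
  classical
  -- `‖V‖ ^ 2 = ‖V * V‖` and the diagonal part of `V * V` is below `c • V`: a quadratic bound
  set V := ∑ i, u i * star (u i)
  set N : ℝ := (Fintype.card ι : ℝ)
  let g i j := u i * (star (u i) * u j) * star (u j)
  have hsplit : V * V = ∑ i, g i i + ∑ i, ∑ j, if i = j then 0 else g i j := by
    rw [Finset.sum_mul_sum, ← Finset.sum_add_distrib]
    refine Finset.sum_congr rfl fun i _ => ?_
    have h (j) : u i * star (u i) * (u j * star (u j))
        = (if i = j then g i j else 0) + (if i = j then 0 else g i j) := by
      split_ifs <;> simp only [g, mul_assoc, add_zero, zero_add]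
    simp only [h, Finset.sum_add_distrib, Finset.sum_ite_eq, Finset.mem_univ, if_true]
  have hoff : ‖∑ i, ∑ j, if i = j then 0 else g i j‖ ≤ N * (N * (ε * c)) := by
    have hsq (i) : ‖u i‖ ^ 2 ≤ c := by
      rw [sq, ← CStarRing.norm_star_mul_self]; exact hc i
    have hg (i j) : ‖if i = j then 0 else g i j‖ ≤ ε * c := by
      split_ifs with hij
      · rw [norm_zero]; positivity
      · calc ‖g i j‖ ≤ ‖u i‖ * ‖star (u i) * u j‖ * ‖u j‖ := by
              simpa only [norm_star] using norm_mul₃_le (a := u i) (c := star (u j))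
          _ ≤ ‖u i‖ * ε * ‖u j‖ := by gcongr; exact hε hij
          _ ≤ ε * c := by nlinarith [hsq i, hsq j, sq_nonneg (‖u i‖ - ‖u j‖)]
    refine (norm_sum_le_of_le _ fun i _ => norm_sum_le_of_le _ fun j _ => hg i j).trans ?_
    simp [N]
  have hquad : ‖V‖ ^ 2 ≤ c * ‖V‖ + N * (N * (ε * c)) := by
    have hV : IsSelfAdjoint V :=
      (Finset.sum_nonneg fun i _ => mul_star_self_nonneg (u i)).isSelfAdjoint
    rw [← hV.norm_mul_self, hsplit]
    exact norm_add_le_of_le (norm_sum_conj_star_mul_self_le u hc0 hc) hoff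
  by_contra! hlt
  have hN : 0 ≤ N ^ 2 * ε := by positivity
  nlinarith [mul_pos ((add_nonneg hc0 hN).trans_lt hlt) (sub_pos.mpr hlt)]

end NormSum

section Trace

variable {B : Type*} [NonUnitalCStarAlgebra B] [PartialOrder B] [StarOrderedRing B]
  {ι : Type*} [Fintype ι] {z : B}

theorem IsApproxCuntzFamily.card_mul_re_le (hz : 0 ≤ z) (τ : B →L[ℂ] ℂ)
    (hτtr : ∀ a b : B, τ (a * b) = τ (b * a)) {ε : ℝ} (hε : 0 ≤ ε) {y : ι → B}
    (hy : IsApproxCuntzFamily z ε y) :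
    Fintype.card ι * ((τ z).re - ‖τ‖ * ε) ≤ ‖τ‖ * (‖z‖ + ε + Fintype.card ι ^ 2 * ε) := by
  set u : ι → B := fun i => CFC.sqrt z * y i
  have hu (i j) : star (u i) * u j = star (y i) * z * y j := by
    rw [star_mul, (CFC.sqrt_nonneg z).isSelfAdjoint.star_eq, mul_assoc, ← mul_assoc (CFC.sqrt z),
      CFC.sqrt_mul_sqrt_self z hz, ← mul_assoc]
  have hτu (i) : (τ z).re - ‖τ‖ * ε ≤ (τ (u i * star (u i))).re := by
    have hclose : (τ z).re - (τ (star (y i) * z * y i)).re ≤ ‖τ‖ * ε :=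
      calc _ = (τ (z - star (y i) * z * y i)).re := by rw [map_sub, Complex.sub_re]
        _ ≤ ‖τ‖ * ‖z - star (y i) * z * y i‖ := (Complex.re_le_norm _).trans (τ.le_opNorm _)
        _ ≤ ‖τ‖ * ε := by gcongr; rw [norm_sub_rev]; exact hy.diag i
    rw [hτtr, hu]
    linarith
  have hdiag (i) : ‖star (u i) * u i‖ ≤ ‖z‖ + ε := by
    rw [hu]
    exact (norm_le_norm_add_norm_sub' _ z).trans (by gcongr; exact hy.diag i)
  calc _ ≤ ∑ i, (τ (u i * star (u i))).re := by
        simpa using Finset.card_nsmul_le_sum Finset.univ _ _ fun i _ => hτu i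
    _ = (τ (∑ i, u i * star (u i))).re := by rw [map_sum, Complex.re_sum]
    _ ≤ ‖τ‖ * ‖∑ i, u i * star (u i)‖ := (Complex.re_le_norm _).trans (τ.le_opNorm _)
    _ ≤ ‖τ‖ * (‖z‖ + ε + Fintype.card ι ^ 2 * ε) := by
        gcongr
        exact norm_sum_mul_star_le u (by positivity) hε hdiag
          fun i j hij => hu i j ▸ hy.offDiag hij

theorem HasApproxCuntzFamilies.card_mul_re_le (hz : 0 ≤ z)
    (τ : B →L[ℂ] ℂ) (hτtr : ∀ a b : B, τ (a * b) = τ (b * a))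
    (h : HasApproxCuntzFamilies z ι) : Fintype.card ι * (τ z).re ≤ ‖τ‖ * ‖z‖ := by
  set N : ℝ := (Fintype.card ι : ℝ)
  have hlim : Tendsto (fun ε => ‖τ‖ * (‖z‖ + ε + N ^ 2 * ε) + N * (‖τ‖ * ε)) (𝓝[>] 0)
      (𝓝 (‖τ‖ * ‖z‖)) := by
    refine tendsto_nhdsWithin_of_tendsto_nhds ?_
    have hcont : Continuous fun ε => ‖τ‖ * (‖z‖ + ε + N ^ 2 * ε) + N * (‖τ‖ * ε) := by
      fun_prop
    convert hcont.tendsto 0 using 2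
    simp
  refine ge_of_tendsto hlim (eventually_nhdsWithin_of_forall fun ε hε => ?_)
  obtain ⟨y, hy⟩ := h ε hε
  have := hy.card_mul_re_le hz τ hτtr (le_of_lt hε)
  linarith

theorem HasApproxCuntzFamilies.re_nonpos {κ : Type*} [Fintype κ] (hκ : 1 < Fintype.card κ)
    (hz : 0 ≤ z) (τ : B →L[ℂ] ℂ) (hτtr : ∀ a b : B, τ (a * b) = τ (b * a))
    (h : HasApproxCuntzFamilies z κ) : (τ z).re ≤ 0 := by
  have : Nonempty κ := Fintype.card_pos_iff.mp (by omega)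
  by_contra! hpos
  obtain ⟨n, hn⟩ := pow_unbounded_of_one_lt (‖τ‖ * ‖z‖ / (τ z).re)
    (Nat.one_lt_cast.mpr hκ : (1 : ℝ) < Fintype.card κ)
  have := (h.pi n).card_mul_re_le hz τ hτtr
  rw [Fintype.card_fun, Fintype.card_fin, Nat.cast_pow] at this
  rw [div_lt_iff₀ hpos] at hn
  linarith

end Trace

theorem hasApproxCuntzFamilies_of_tendsto {B : Type*} [NonUnitalCStarAlgebra B] {z : B}
    {x : ℕ → Matrix (Fin 2) (Fin 2) B}
    (hx : Tendsto
      (fun k => ‖star (x k) * Matrix.diagonal ![z, 0] * x k - Matrix.diagonal ![z, z]‖)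
      atTop (𝓝 0)) :
    HasApproxCuntzFamilies z (Fin 2) := by
  intro ε hε
  obtain ⟨k, hk⟩ := (hx.eventually (gt_mem_nhds hε)).exists
  have hentry (i j : Fin 2) :
      (star (x k) * Matrix.diagonal ![z, 0] * x k - Matrix.diagonal ![z, z]) i j
        = star (x k 0 i) * z * x k 0 j - if i = j then z else 0 := by
    fin_cases i <;> fin_cases j <;>
      simp [Matrix.mul_apply, Fin.sum_univ_two, Matrix.diagonal, mul_assoc]
  have hle (i j : Fin 2) : ‖star (x k 0 i) * z * x k 0 j - if i = j then z else 0‖ ≤ ε :=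
    hentry i j ▸ (Matrix.norm_entry_le_entrywise_sup_norm _).trans hk.le
  exact ⟨fun j => x k 0 j, fun i => by simpa using hle i i,
    fun i j hij => by simpa [hij] using hle i j⟩

/-- Let `B` be a C*-algebra, `z ∈ B` positive, and `τ : B → ℂ` a continuous positive tracial
linear functional.  If the diagonal matrix `diag(z, z)` is Cuntz subequivalent to `diag(z, 0)`
in `M₂(B)`, i.e. there is a sequence `(x k)` in `M₂(B)` with
`‖(x k)* ⬝ diag(z, 0) ⬝ (x k) − diag(z, z)‖ → 0`, then `τ z = 0`. -/
theorem trace_eq_zero_of_diag_cuntz_subequiv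
    {B : Type*} [NonUnitalCStarAlgebra B] [PartialOrder B] [StarOrderedRing B]
    (z : B) (hz : 0 ≤ z) (τ : B →L[ℂ] ℂ)
    (hτpos : ∀ b : B, 0 ≤ b → 0 ≤ τ b)
    (hτtr : ∀ a b : B, τ (a * b) = τ (b * a))
    (x : ℕ → Matrix (Fin 2) (Fin 2) B)
    (hx : Tendsto
      (fun k => ‖star (x k) * Matrix.diagonal ![z, 0] * x k - Matrix.diagonal ![z, z]‖)
      atTop (nhds 0)) :
    τ z = 0 := by
  have hre : (τ z).re ≤ 0 :=
    (hasApproxCuntzFamilies_of_tendsto hx).re_nonpos (by simp) hz τ hτtr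
  obtain ⟨hre_nonneg, him⟩ := Complex.nonneg_iff.mp (hτpos z hz)
  exact Complex.ext (le_antisymm hre hre_nonneg) him.symm
end

section
/- A C*-algebra A is semi-finite if and only if its multiplier algebra M(A) is semi-finite; that is, every nonzero positive element of A dominates a nonzero finite positive element of A if and only if every nonzero positive element of M(A) dominates a nonzero finite positive element of M(A). -/
/-!
`A` sits in `M(A)` as a closed hereditary ideal: if `star c * c ≤ a` with `a ∈ A`, then along an
approximate unit `(e)` of `A` we have `‖c - c e‖² ≤ ‖e - 1‖ ‖a e - a‖ → 0`, so `c` is a limit of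
the elements `c e ∈ A`. Consequently every sequence `z` with `∑ star z * z` converging to an
element of `A` lies in `A`, and an element of `A` is finite in `A` iff it is finite in `M(A)`.

If `A` is semi-finite and `0 ≠ x ≥ 0` in `M(A)`, pick `b` in the unit ball of `A` with
`√x b ≠ 0`; then `a = √x b ∈ A` and `0 ≠ a a* = √x b b* √x ≤ ‖b b*‖ x ≤ x`, and a nonzero finite
element of `A` below `a a*` does the job. Conversely, a finite element of `M(A)` below a positive
element of `A` lies in `A` by heredity.
-/

open Filter Topology
open scoped MultiplierAlgebra

/-- An element `x` of a C*-algebra `A` is *finite in the sense of Cuntz and Pedersen*: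
for every sequence `(z k)` in `A` such that `∑ star (z k) * z k` converges in norm to `x` and
`∑ z k * star (z k)` converges in norm to `y` with `y ≤ x`, one has `y = x`. -/
def CPFinite {A : Type*} [NonUnitalRing A] [StarRing A] [TopologicalSpace A]
    [PartialOrder A] (x : A) : Prop :=
  ∀ z : ℕ → A, ∀ y : A,
    Tendsto (fun n => ∑ k ∈ Finset.range n, star (z k) * z k) atTop (nhds x) →
    Tendsto (fun n => ∑ k ∈ Finset.range n, z k * star (z k)) atTop (nhds y) →
    y ≤ x → y = x

section

variable {A : Type*} [NonUnitalCStarAlgebra A] [PartialOrder A] [StarOrderedRing A]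

/-- The canonical partial order on the multiplier algebra `M(A) = 𝓜(ℂ, A)`. -/
noncomputable local instance : PartialOrder 𝓜(ℂ, A) := CStarAlgebra.spectralOrder _

local instance : StarOrderedRing 𝓜(ℂ, A) := CStarAlgebra.spectralOrderedRing _

theorem map_nonneg_iff_of_injective {F B : Type*} [NonUnitalRing B] [StarRing B]
    [PartialOrder B] [StarOrderedRing B] [FunLike F A B] [NonUnitalRingHomClass F A B]
    [NonUnitalStarRingHomClass F A B] (φ : F) (hφ : Function.Injective φ) {a : A} :
    0 ≤ φ a ↔ 0 ≤ a := by
  refine ⟨fun h => ?_, map_nonneg φ⟩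
  have ha : IsSelfAdjoint a := hφ <| by rw [map_star, h.isSelfAdjoint.star_eq]
  rw [← CFC.negPart_eq_zero_iff a ha]
  -- `φ (a⁻ * a * a⁻) = -φ ((a⁻)³)` is both nonnegative and nonpositive, so `(a⁻)³ = 0`.
  set n := a⁻
  have hn : IsSelfAdjoint n := (CFC.negPart_nonneg a).isSelfAdjoint
  have hcube : 0 ≤ n * n * n := by
    simpa only [hn.star_eq] using star_left_conjugate_nonneg (CFC.negPart_nonneg a) n
  have hconj : n * a * n = -(n * n * n) := by
    conv_lhs => rw [← CFC.posPart_sub_negPart a ha]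
    rw [mul_sub, CFC.negPart_mul_posPart, zero_sub, neg_mul]
  have hφcube : φ (n * n * n) = 0 := by
    refine le_antisymm ?_ (map_nonneg φ hcube)
    have := star_left_conjugate_nonneg h (φ n)
    rwa [← map_star, hn.star_eq, ← map_mul, ← map_mul, hconj, map_neg, neg_nonneg] at this
  have hsq : n * n = 0 := by
    refine (CStarRing.star_mul_self_eq_zero_iff (n * n)).1 ?_
    rw [star_mul, hn.star_eq, ← mul_assoc, (map_eq_zero_iff φ hφ).1 hφcube, zero_mul]
  exact (CStarRing.star_mul_self_eq_zero_iff n).1 (by rwa [hn.star_eq])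

theorem map_le_map_iff_of_injective {F B : Type*} [NonUnitalRing B] [StarRing B]
    [PartialOrder B] [StarOrderedRing B] [FunLike F A B] [NonUnitalRingHomClass F A B]
    [NonUnitalStarRingHomClass F A B] (φ : F) (hφ : Function.Injective φ) {a b : A} :
    φ a ≤ φ b ↔ a ≤ b := by
  rw [← sub_nonneg, ← map_sub, map_nonneg_iff_of_injective φ hφ, sub_nonneg]

theorem norm_mul_sq_le_of_star_mul_self_le {B : Type*} [NonUnitalCStarAlgebra B]
    [PartialOrder B] [StarOrderedRing B] {c u : B} (h : star c * c ≤ u) (d : B) :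
    ‖c * d‖ ^ 2 ≤ ‖d‖ * ‖u * d‖ :=
  calc ‖c * d‖ ^ 2 = ‖star d * (star c * c) * d‖ := by
        rw [sq, ← CStarRing.norm_star_mul_self, star_mul, mul_assoc, mul_assoc, mul_assoc]
    _ ≤ ‖star d * u * d‖ := CStarAlgebra.norm_le_norm_of_nonneg_of_le
        (star_left_conjugate_nonneg (star_mul_self_nonneg c) d)
        (star_left_conjugate_le_conjugate h d)
    _ ≤ ‖d‖ * ‖u * d‖ := by
        rw [mul_assoc, ← norm_star d]
        exact norm_mul_le _ _

theorem le_of_tendsto_sum_range {M : Type*} [AddCommMonoid M] [PartialOrder M]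
    [IsOrderedAddMonoid M] [TopologicalSpace M] [OrderClosedTopology M] {f : ℕ → M}
    (hf : ∀ k, 0 ≤ f k) {L : M}
    (hL : Tendsto (fun n => ∑ k ∈ Finset.range n, f k) atTop (𝓝 L)) (k : ℕ) : f k ≤ L :=
  calc f k ≤ ∑ i ∈ Finset.range (k + 1), f i :=
        Finset.single_le_sum (fun i _ => hf i) (Finset.self_mem_range_succ k)
    _ ≤ L := Monotone.ge_of_tendsto (monotone_nat_of_le_succ fun n => by
        rw [Finset.sum_range_succ]; exact le_add_of_nonneg_right (hf n)) hL (k + 1)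

namespace DoubleCentralizer

omit [PartialOrder A] [StarOrderedRing A] in
theorem fst_injective : Function.Injective (fun x : 𝓜(ℂ, A) => x.fst) := fun x y h =>
  sub_eq_zero.1 <| norm_eq_zero.1 <| by
    rw [← norm_fst, sub_fst, sub_eq_zero.2 h, norm_zero]

omit [PartialOrder A] [StarOrderedRing A] in
theorem fst_mul (x : 𝓜(ℂ, A)) (a b : A) : x.fst (a * b) = x.fst a * b := by
  set d := x.fst (a * b) - x.fst a * b
  have : star d * d = 0 := by
    rw [mul_sub, ← x.central, ← mul_assoc (star d), ← x.central, mul_assoc, sub_self]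
  exact sub_eq_zero.1 (CStarRing.star_mul_self_eq_zero_iff d |>.1 this)

omit [PartialOrder A] [StarOrderedRing A] in
theorem mul_coeHom (x : 𝓜(ℂ, A)) (a : A) : x * coeHom a = coeHom (x.fst a) :=
  fst_injective <| ContinuousLinearMap.ext fun b => fst_mul x a b

omit [PartialOrder A] [StarOrderedRing A] in
theorem norm_coeHom (a : A) : ‖(coeHom a : 𝓜(ℂ, A))‖ = ‖a‖ := by
  rw [← norm_fst]
  exact ContinuousLinearMap.opNorm_mul_apply ℂ A a

omit [PartialOrder A] [StarOrderedRing A] in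
theorem isometry_coeHom : Isometry (coeHom : A →⋆ₙₐ[ℂ] 𝓜(ℂ, A)) :=
  AddMonoidHomClass.isometry_of_norm _ norm_coeHom

omit [PartialOrder A] [StarOrderedRing A] in
theorem coeHom_injective : Function.Injective (coeHom : A →⋆ₙₐ[ℂ] 𝓜(ℂ, A)) :=
  isometry_coeHom.injective

omit [PartialOrder A] [StarOrderedRing A] in
theorem isClosed_range_coeHom : IsClosed (Set.range (coeHom : A →⋆ₙₐ[ℂ] 𝓜(ℂ, A))) :=
  isometry_coeHom.isClosedEmbedding.isClosed_range

theorem coeHom_nonneg_iff {a : A} : 0 ≤ (coeHom a : 𝓜(ℂ, A)) ↔ 0 ≤ a :=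
  map_nonneg_iff_of_injective _ coeHom_injective

theorem coeHom_le_coeHom_iff {a b : A} : (coeHom a : 𝓜(ℂ, A)) ≤ coeHom b ↔ a ≤ b :=
  map_le_map_iff_of_injective _ coeHom_injective

theorem mem_range_coeHom_of_star_mul_self_le {c : 𝓜(ℂ, A)} {a : A}
    (h : star c * c ≤ coeHom a) : c ∈ Set.range (coeHom : A →⋆ₙₐ[ℂ] 𝓜(ℂ, A)) := by
  have hl := CStarAlgebra.increasingApproximateUnit A
  have hbound : ∀ᶠ e in CStarAlgebra.approximateUnit A,
      ‖c * coeHom e - c‖ ^ 2 ≤ (1 + ‖(1 : 𝓜(ℂ, A))‖) * ‖a * e - a‖ := by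
    filter_upwards [hl.eventually_norm] with e he
    have := norm_mul_sq_le_of_star_mul_self_le h (coeHom e - 1)
    rw [mul_sub, mul_one, mul_sub, mul_one, ← map_mul, ← map_sub, norm_coeHom] at this
    refine this.trans (mul_le_mul_of_nonneg_right ?_ (norm_nonneg _))
    exact (norm_sub_le _ _).trans (by rw [norm_coeHom]; linarith)
  have hsq : Tendsto (fun e => ‖c * coeHom e - c‖ ^ 2) (CStarAlgebra.approximateUnit A) (𝓝 0) :=
    squeeze_zero' (.of_forall fun _ => by positivity) hbound <| by
      simpa using ((hl.tendsto_mul_left a).sub_const a).norm.const_mul (1 + ‖(1 : 𝓜(ℂ, A))‖)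
  have hlim : Tendsto (fun e => c * coeHom e) (CStarAlgebra.approximateUnit A) (𝓝 c) := by
    rw [tendsto_iff_norm_sub_tendsto_zero]
    simpa [Function.comp_def, Real.sqrt_sq_eq_abs] using (Real.continuous_sqrt.tendsto 0).comp hsq
  exact isClosed_range_coeHom.mem_of_tendsto hlim (.of_forall fun e => ⟨_, (mul_coeHom c e).symm⟩)

theorem mem_range_coeHom_of_nonneg_of_le {x : 𝓜(ℂ, A)} {a : A} (hx : 0 ≤ x)
    (h : x ≤ coeHom a) : x ∈ Set.range (coeHom : A →⋆ₙₐ[ℂ] 𝓜(ℂ, A)) := by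
  have hsqrt : star (CFC.sqrt x) * CFC.sqrt x = x := by
    rw [(CFC.sqrt_nonneg x).isSelfAdjoint.star_eq, CFC.sqrt_mul_sqrt_self x hx]
  obtain ⟨b, hb⟩ := mem_range_coeHom_of_star_mul_self_le (hsqrt ▸ h)
  exact ⟨star b * b, by rw [map_mul, map_star, hb, hsqrt]⟩

omit [PartialOrder A] [StarOrderedRing A] in
theorem exists_norm_le_one_fst_ne_zero {x : 𝓜(ℂ, A)} (hx : x ≠ 0) :
    ∃ b : A, ‖b‖ ≤ 1 ∧ x.fst b ≠ 0 := by
  obtain ⟨b, hb⟩ : ∃ b, x.fst b ≠ 0 := DFunLike.ne_iff.1 fun h => hx (fst_injective h)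
  have hb0 : b ≠ 0 := by rintro rfl; exact hb (map_zero _)
  refine ⟨(‖b‖⁻¹ : ℂ) • b, ?_, ?_⟩
  · rw [norm_smul, norm_inv, Complex.norm_real, norm_norm, inv_mul_cancel₀ (norm_ne_zero_iff.2 hb0)]
  · rw [map_smul]
    exact smul_ne_zero (by simpa using hb0) hb

theorem cpFinite_coeHom_iff {y : A} : CPFinite (coeHom y : 𝓜(ℂ, A)) ↔ CPFinite y := by
  have hemb := (isometry_coeHom (A := A)).isClosedEmbedding.isEmbedding
  have hsum₁ (ζ : ℕ → A) (n : ℕ) : ∑ k ∈ Finset.range n, star (coeHom (ζ k)) * coeHom (ζ k) =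
      coeHom (𝕜 := ℂ) (∑ k ∈ Finset.range n, star (ζ k) * ζ k) := by
    simp only [map_sum, map_mul, map_star]
  have hsum₂ (ζ : ℕ → A) (n : ℕ) : ∑ k ∈ Finset.range n, coeHom (ζ k) * star (coeHom (ζ k)) =
      coeHom (𝕜 := ℂ) (∑ k ∈ Finset.range n, ζ k * star (ζ k)) := by
    simp only [map_sum, map_mul, map_star]
  constructor
  · intro hfin z w hz hw hwy
    refine coeHom_injective (hfin (fun k => coeHom (z k)) (coeHom w) ?_ ?_
      (coeHom_le_coeHom_iff.2 hwy))
    · simpa only [hsum₁, Function.comp_def] using hemb.tendsto_nhds_iff.1 hz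
    · simpa only [hsum₂, Function.comp_def] using hemb.tendsto_nhds_iff.1 hw
  · intro hfin z w hz hw hwy
    have hzA (k : ℕ) : z k ∈ Set.range (coeHom : A →⋆ₙₐ[ℂ] 𝓜(ℂ, A)) :=
      mem_range_coeHom_of_star_mul_self_le
        (le_of_tendsto_sum_range (fun k => star_mul_self_nonneg (z k)) hz k)
    choose ζ hζ using hzA
    obtain rfl : (fun k => coeHom (ζ k)) = z := funext hζ
    obtain ⟨v, rfl⟩ : w ∈ Set.range (coeHom : A →⋆ₙₐ[ℂ] 𝓜(ℂ, A)) :=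
      isClosed_range_coeHom.mem_of_tendsto hw (.of_forall fun n => ⟨_, (hsum₂ ζ n).symm⟩)
    simp only [hsum₁, hsum₂] at hz hw
    rw [hfin ζ v (hemb.tendsto_nhds_iff.2 hz) (hemb.tendsto_nhds_iff.2 hw)
      (coeHom_le_coeHom_iff.1 hwy)]

end DoubleCentralizer

open DoubleCentralizer

/-- A C*-algebra `A` is semi-finite (in the sense of Cuntz and Pedersen) if and only if its
multiplier algebra `M(A)` is semi-finite: every nonzero positive element of `A` dominates a
nonzero finite positive element of `A` if and only if every nonzero positive element of `M(A)`
dominates a nonzero finite positive element of `M(A)`. -/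
theorem semifinite_iff_multiplier_semifinite :
    (∀ x : A, 0 ≤ x → x ≠ 0 → ∃ y : A, 0 ≤ y ∧ y ≠ 0 ∧ y ≤ x ∧ CPFinite y) ↔
    (∀ x : 𝓜(ℂ, A), 0 ≤ x → x ≠ 0 → ∃ y : 𝓜(ℂ, A), 0 ≤ y ∧ y ≠ 0 ∧ y ≤ x ∧ CPFinite y) := by
  constructor
  · intro hA x hx hx0
    set q := CFC.sqrt x
    have hq : IsSelfAdjoint q := (CFC.sqrt_nonneg x).isSelfAdjoint
    obtain ⟨b, hb, hqb⟩ := exists_norm_le_one_fst_ne_zero ((CFC.sqrt_eq_zero_iff x hx).not.2 hx0)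
    set a := q.fst b
    have hax : coeHom (a * star a) ≤ x := calc
      coeHom (a * star a) = star q * coeHom (b * star b) * q := by
        rw [map_mul, map_star, ← mul_coeHom, star_mul, hq.star_eq, map_mul, map_star]
        simp only [mul_assoc]
      _ ≤ ‖(coeHom (b * star b) : 𝓜(ℂ, A))‖ • (star q * q) :=
        CStarAlgebra.star_left_conjugate_le_norm_smul ((IsSelfAdjoint.mul_star_self b).map _)
      _ ≤ x := by
        rw [hq.star_eq, CFC.sqrt_mul_sqrt_self x hx, norm_coeHom, CStarRing.norm_self_mul_star]
        exact smul_le_of_le_one_left hx (mul_le_one₀ hb (norm_nonneg b) hb)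
    obtain ⟨y, hy0, hy, hya, hyfin⟩ := hA (a * star a) (mul_star_self_nonneg a)
      ((CStarRing.mul_star_self_eq_zero_iff a).not.2 hqb)
    exact ⟨coeHom y, map_nonneg _ hy0, (map_ne_zero_iff _ coeHom_injective).2 hy,
      (coeHom_le_coeHom_iff.2 hya).trans hax, cpFinite_coeHom_iff.2 hyfin⟩
  · intro hM x hx hx0
    obtain ⟨y, hy0, hy, hyx, hyfin⟩ := hM (coeHom x) (map_nonneg _ hx)
      ((map_ne_zero_iff _ coeHom_injective).2 hx0)
    obtain ⟨y, rfl⟩ := mem_range_coeHom_of_nonneg_of_le hy0 hyx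
    exact ⟨y, coeHom_nonneg_iff.1 hy0, (map_ne_zero_iff _ coeHom_injective).1 hy,
      coeHom_le_coeHom_iff.1 hyx, cpFinite_coeHom_iff.1 hyfin⟩

end
end
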